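/- arXiv:0907.5494 — 3 statements merged into one kernel-verified Lean document; each statement's English description precedes it below -/
import Mathlib

section
/- Let σ > 0, μ₂ − μ₁ = 7σ, and let f = w₁·φ_{μ₁,σ} + w₂·φ_{μ₂,σ} with {w₁, w₂} = {0.2, 0.8}. Set a = 2.5σ and S_a = [μ₁−a, μ₁+a] × [μ₂−a, μ₂+a]. Then S_a is a stable region for the one-step population k-means update with K' = 2: for every c = (c₁,c₂) ∈ S_a the updated pair c' = (c'₁, c'₂) again lies in S_a. -/
open MeasureTheory

/-- pdf of the normal distribution with mean `μ` and standard deviation `σ`. -/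
noncomputable def gpdf (μ σ x : ℝ) : ℝ :=
  (σ * Real.sqrt (2 * Real.pi))⁻¹ * Real.exp (-((x - μ) ^ 2) / (2 * σ ^ 2))

/-- center of mass of the set `s` under the density `f`. -/
noncomputable def cm (f : ℝ → ℝ) (s : Set ℝ) : ℝ :=
  (∫ x in s, x * f x) / ∫ x in s, f x

/-- One step of the population k-means update with `K' = 2` centers. -/
noncomputable def update2 (f : ℝ → ℝ) (c : ℝ × ℝ) : ℝ × ℝ :=
  (cm f (Set.Iic ((c.1 + c.2) / 2)), cm f (Set.Ioi ((c.1 + c.2) / 2)))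

open Set Filter

lemma gpdf_pos {σ : ℝ} (hσ : 0 < σ) (μ x : ℝ) : 0 < gpdf μ σ x := by
  unfold gpdf
  positivity

lemma gpdf_neg' (μ σ x : ℝ) : gpdf μ σ (-x) = gpdf (-μ) σ x := by
  unfold gpdf
  ring_nf

lemma continuous_gpdf (μ σ : ℝ) : Continuous (gpdf μ σ) := by
  unfold gpdf
  fun_prop

lemma sigma_gpdf_le {σ : ℝ} (hσ : 0 < σ) (μ x : ℝ) (h : σ ≤ |x - μ|) :
    σ * gpdf μ σ x ≤ 1 / 4 := by
  have h2π : (6.25 : ℝ) ≤ 2 * Real.pi := by nlinarith [Real.pi_gt_d6]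
  have hs : (2.5:ℝ) ≤ Real.sqrt (2 * Real.pi) := by
    rw [show (2.5:ℝ) = Real.sqrt (2.5^2) by rw [Real.sqrt_sq]; norm_num]
    exact Real.sqrt_le_sqrt (by norm_num at h2π ⊢; linarith)
  have hsp : (0:ℝ) < Real.sqrt (2 * Real.pi) := by linarith
  have hexp : Real.exp (-((x - μ) ^ 2) / (2 * σ ^ 2)) ≤ Real.exp (-(1/2)) := by
    apply Real.exp_le_exp.2
    rw [div_le_iff₀ (by positivity)]
    have : σ^2 ≤ (x-μ)^2 := by
      have := sq_abs (x - μ)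
      nlinarith [abs_nonneg (x-μ)]
    nlinarith
  have he : Real.exp (-(1/2 : ℝ)) ≤ 0.625 := by
    rw [Real.exp_neg]
    rw [inv_le_comm₀ (Real.exp_pos _) (by norm_num)]
    have h1 : (1.6:ℝ) ≤ Real.exp (1/2) := by
      have h2 : Real.exp (1/2) ^ 2 = Real.exp 1 := by
        rw [← Real.exp_nat_mul]
        · norm_num
      nlinarith [Real.exp_one_gt_d9, Real.exp_pos (1/2:ℝ)]
    linarith
  have : σ * gpdf μ σ x = (Real.sqrt (2*Real.pi))⁻¹ * Real.exp (-((x - μ) ^ 2) / (2 * σ ^ 2)) := by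
    unfold gpdf
    rw [mul_inv]
    field_simp
  rw [this]
  have hinv : (Real.sqrt (2*Real.pi))⁻¹ ≤ 0.4 := by
    rw [inv_le_comm₀ hsp (by norm_num)]
    linarith
  have hexp' : Real.exp (-((x - μ) ^ 2) / (2 * σ ^ 2)) ≤ 0.625 := le_trans hexp he
  have h0 : 0 < Real.exp (-((x - μ) ^ 2) / (2 * σ ^ 2)) := Real.exp_pos _
  nlinarith [inv_nonneg.2 hsp.le]

lemma hasDerivAt_gpdf {σ : ℝ} (hσ : 0 < σ) (μ x : ℝ) :
    HasDerivAt (gpdf μ σ) (-((x - μ)/σ^2) * gpdf μ σ x) x := by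
  have h0 : HasDerivAt (fun x : ℝ => -((x - μ)^2) / (2*σ^2)) (-((x-μ)/σ^2)) x := by
    have h1 : HasDerivAt (fun x : ℝ => x - μ) 1 x := (hasDerivAt_id x).sub_const μ
    have h2 := ((h1.pow 2).neg).div_const (2*σ^2)
    refine h2.congr_deriv ?_
    field_simp
    ring
  have h3 := (h0.exp).const_mul ((σ * Real.sqrt (2*Real.pi))⁻¹)
  refine h3.congr_deriv ?_
  unfold gpdf
  ring

lemma integrable_gpdf {σ : ℝ} (hσ : 0 < σ) (μ : ℝ) : Integrable (gpdf μ σ) := by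
  have hb : (0:ℝ) < 1/(2*σ^2) := by positivity
  have h1 : Integrable (fun x : ℝ => Real.exp (-(1/(2*σ^2)) * x^2)) := integrable_exp_neg_mul_sq hb
  have h2 := (h1.comp_sub_right μ).const_mul ((σ * Real.sqrt (2*Real.pi))⁻¹)
  convert h2 using 2 with x
  unfold gpdf
  congr 1
  field_simp

lemma integrable_sub_mul_gpdf {σ : ℝ} (hσ : 0 < σ) (μ : ℝ) :
    Integrable (fun x => (x - μ) * gpdf μ σ x) := by
  have hb : (0:ℝ) < 1/(2*σ^2) := by positivity
  have h1 : Integrable (fun x : ℝ => x * Real.exp (-(1/(2*σ^2)) * x^2)) :=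
    integrable_mul_exp_neg_mul_sq hb
  have h2 := (h1.comp_sub_right μ).const_mul ((σ * Real.sqrt (2*Real.pi))⁻¹)
  convert h2 using 2 with x
  unfold gpdf
  rw [show -(1/(2*σ^2)) * (x - μ)^2 = -((x - μ) ^ 2) / (2 * σ ^ 2) by field_simp]
  ring

lemma integrable_mul_gpdf {σ : ℝ} (hσ : 0 < σ) (μ : ℝ) :
    Integrable (fun x => x * gpdf μ σ x) := by
  have h := (integrable_sub_mul_gpdf hσ μ).add ((integrable_gpdf hσ μ).const_mul μ)
  refine h.congr (ae_of_all _ fun x => ?_)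
  simp only [Pi.add_apply]
  ring

lemma integral_gpdf {σ : ℝ} (hσ : 0 < σ) (μ : ℝ) : ∫ x, gpdf μ σ x = 1 := by
  have hb : (0:ℝ) < 1/(2*σ^2) := by positivity
  have h1 : ∫ x : ℝ, Real.exp (-(1/(2*σ^2)) * (x-μ)^2) = Real.sqrt (Real.pi / (1/(2*σ^2))) := by
    rw [integral_sub_right_eq_self (fun a : ℝ => Real.exp (-(1/(2*σ^2)) * a^2)) μ]
    exact integral_gaussian _
  have h2 : Real.sqrt (Real.pi / (1/(2*σ^2))) = σ * Real.sqrt (2*Real.pi) := by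
    rw [show Real.pi / (1/(2*σ^2)) = σ^2 * (2*Real.pi) by field_simp]
    rw [Real.sqrt_mul (sq_nonneg σ), Real.sqrt_sq hσ.le]
  have h3 : ∫ x, gpdf μ σ x = (σ * Real.sqrt (2*Real.pi))⁻¹ * (σ * Real.sqrt (2*Real.pi)) := by
    unfold gpdf
    rw [MeasureTheory.integral_const_mul]
    have he : (fun x : ℝ => Real.exp (-(x - μ) ^ 2 / (2 * σ ^ 2)))
        = (fun x : ℝ => Real.exp (-(1/(2*σ^2)) * (x-μ)^2)) := by
      funext x
      congr 1
      field_simp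
    rw [he, h1, h2]
  rw [h3]
  have : (0:ℝ) < σ * Real.sqrt (2*Real.pi) := by
    have : (0:ℝ) < Real.sqrt (2*Real.pi) := Real.sqrt_pos.2 (by positivity)
    positivity
  field_simp

lemma tendsto_gpdf_atTop {σ : ℝ} (hσ : 0 < σ) (μ : ℝ) :
    Tendsto (gpdf μ σ) atTop (nhds 0) := by
  have h1 : Tendsto (fun x : ℝ => -((x - μ)^2) / (2*σ^2)) atTop atBot := by
    apply Tendsto.atBot_div_const (by positivity)
    apply tendsto_neg_atBot_iff.2
    exact (tendsto_pow_atTop (two_ne_zero)).comp (tendsto_atTop_add_const_right _ (-μ) tendsto_id)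
  have h2 : Tendsto (fun x : ℝ => Real.exp (-((x - μ)^2) / (2*σ^2))) atTop (nhds 0) :=
    Real.tendsto_exp_atBot.comp h1
  have h3 := h2.const_mul ((σ * Real.sqrt (2*Real.pi))⁻¹)
  rw [mul_zero ((σ * Real.sqrt (2*Real.pi))⁻¹)] at h3
  exact h3

lemma moment_Ioi {σ : ℝ} (hσ : 0 < σ) (μ b : ℝ) :
    ∫ x in Ioi b, (x - μ) * gpdf μ σ x = σ^2 * gpdf μ σ b := by
  have hderiv : ∀ x ∈ Ici b, HasDerivAt (fun y => -σ^2 * gpdf μ σ y) ((x - μ) * gpdf μ σ x) x := by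
    intro x _
    have := (hasDerivAt_gpdf hσ μ x).const_mul (-σ^2)
    refine this.congr_deriv ?_
    field_simp
  have hint : IntegrableOn (fun x => (x - μ) * gpdf μ σ x) (Ioi b) :=
    (integrable_sub_mul_gpdf hσ μ).integrableOn
  have hlim : Tendsto (fun y => -σ^2 * gpdf μ σ y) atTop (nhds 0) := by
    simpa using (tendsto_gpdf_atTop hσ μ).const_mul (-σ^2)
  have := integral_Ioi_of_hasDerivAt_of_tendsto' hderiv hint hlim
  rw [this]
  ring

lemma mills_lower {σ : ℝ} (hσ : 0 < σ) {μ b : ℝ} (hb : μ + σ ≤ b) :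
    σ^2 * (b - μ) * gpdf μ σ b / ((b - μ)^2 + σ^2) ≤ ∫ x in Ioi b, gpdf μ σ x := by
  set F : ℝ → ℝ := fun x => -(σ^2 * (x - μ) * gpdf μ σ x / ((x - μ)^2 + σ^2)) with hF
  set F' : ℝ → ℝ :=
    fun x => gpdf μ σ x * (((x-μ)^2+σ^2)^2 - 2*σ^4) / (((x-μ)^2+σ^2)^2) with hF'
  have hm : ∀ x : ℝ, ((x-μ)^2+σ^2) ≠ 0 := fun x => by positivity
  have hderiv : ∀ x ∈ Ici b, HasDerivAt F (F' x) x := by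
    intro x _
    have hg := hasDerivAt_gpdf hσ μ x
    have hn : HasDerivAt (fun x => σ^2*(x-μ)*gpdf μ σ x) ((σ^2 - (x-μ)^2) * gpdf μ σ x) x := by
      have h1 : HasDerivAt (fun x : ℝ => σ^2*(x-μ)) (σ^2) x := by
        simpa using ((hasDerivAt_id x).sub_const μ).const_mul (σ^2)
      have h2 := h1.mul hg
      refine h2.congr_deriv ?_
      field_simp
      ring
    have hmd : HasDerivAt (fun x : ℝ => (x-μ)^2+σ^2) (2*(x-μ)) x := by
      have := (((hasDerivAt_id x).sub_const μ).pow 2).add_const (σ^2)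
      refine this.congr_deriv ?_
      simp only [id_eq]
      ring
    have hdiv := (hn.div hmd (hm x)).neg
    refine hdiv.congr_deriv ?_
    rw [hF']
    field_simp
    ring
  have hpos : ∀ x ∈ Ioi b, 0 ≤ F' x := by
    intro x hx
    have hy : σ ≤ x - μ := by
      have : b < x := hx
      linarith
    have hg := gpdf_pos hσ μ x
    have hy2 : σ^2 ≤ (x-μ)^2 := by nlinarith
    have hbr : 0 ≤ ((x-μ)^2+σ^2)^2 - 2*σ^4 := by nlinarith [mul_self_nonneg ((x-μ)^2 - σ^2)]
    rw [hF']
    exact div_nonneg (mul_nonneg hg.le hbr) (by positivity)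
  have hlim : Tendsto F atTop (nhds 0) := by
    apply squeeze_zero_norm (a := fun x => (σ/2) * gpdf μ σ x)
    · intro x
      have hg := gpdf_pos hσ μ x
      rw [hF]
      rw [Real.norm_eq_abs, abs_neg, abs_div, abs_of_pos (by positivity : (0:ℝ) < (x-μ)^2+σ^2)]
      rw [div_le_iff₀ (by positivity)]
      have : |σ^2 * (x - μ) * gpdf μ σ x| = σ^2 * |x - μ| * gpdf μ σ x := by
        rw [abs_mul, abs_mul, abs_of_pos (by positivity : (0:ℝ) < σ^2), abs_of_pos hg]
      rw [this]
      nlinarith [mul_nonneg hg.le (sq_nonneg (|x - μ| - σ)), abs_nonneg (x-μ), sq_abs (x-μ),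
        mul_pos hσ hg]
    · simpa using (tendsto_gpdf_atTop hσ μ).const_mul (σ/2)
  have key := integral_Ioi_of_hasDerivAt_of_nonneg' hderiv hpos hlim
  have hint := integrableOn_Ioi_deriv_of_nonneg' hderiv hpos hlim
  have hmono : ∫ x in Ioi b, F' x ≤ ∫ x in Ioi b, gpdf μ σ x := by
    apply setIntegral_mono_on hint (integrable_gpdf hσ μ).integrableOn measurableSet_Ioi
    intro x _
    rw [hF', div_le_iff₀ (by positivity)]
    nlinarith [mul_nonneg (gpdf_pos hσ μ x).le (by positivity : (0:ℝ) ≤ 2*σ^4)]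
  calc σ^2 * (b - μ) * gpdf μ σ b / ((b - μ)^2 + σ^2) = 0 - F b := by rw [hF]; ring
  _ = ∫ x in Ioi b, F' x := key.symm
  _ ≤ _ := hmono

lemma mills_alg {σ y s g : ℝ} (hσ : 0 < σ) (hy : 0 ≤ y) (hg : 0 ≤ g) (hs0 : 0 < s)
    (hs2 : s^2 = y^2 + 8*σ^2) :
    g ≤ 4*y*g/(3*y+s) + 4*σ^2*g*(3+y/s)/(3*y+s)^2 := by
  have hq : 0 < 3*y+s := by linarith
  have hkey : y^3+6*σ^2*y ≤ s*(y^2+2*σ^2) := by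
    have ha : 0 < s*(y^2+2*σ^2) := by positivity
    have key : (s*(y^2+2*σ^2) - (y^3+6*σ^2*y)) * (s*(y^2+2*σ^2) + (y^3+6*σ^2*y)) = 32*σ^6 := by
      linear_combination (y^2+2*σ^2)^2 * hs2
    have hb : 0 ≤ y^3+6*σ^2*y := by positivity
    nlinarith [key, ha, hb, pow_pos hσ 6]
  have hN : 4*y*(3*y+s)*s + 4*σ^2*(3*s+y) - (3*y+s)^2*s
      = 2*(s*(y^2+2*σ^2) - (y^3+6*σ^2*y)) := by
    linear_combination (-2*y - s) * hs2
  have hNpos : 0 ≤ 4*y*(3*y+s)*s + 4*σ^2*(3*s+y) - (3*y+s)^2*s := by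
    rw [hN]; linarith
  have expand : 4*y*g/(3*y+s) + 4*σ^2*g*(3+y/s)/(3*y+s)^2 - g
      = g * ((4*y*(3*y+s)*s + 4*σ^2*(3*s+y) - (3*y+s)^2*s) / ((3*y+s)^2 * s)) := by
    field_simp
  nlinarith [mul_nonneg hg (div_nonneg hNpos (by positivity : (0:ℝ) ≤ (3*y+s)^2 * s)), expand]

lemma mills_upper {σ : ℝ} (hσ : 0 < σ) {μ b : ℝ} (hb : μ ≤ b) :
    ∫ x in Ioi b, gpdf μ σ x
      ≤ 4*σ^2 * gpdf μ σ b / (3*(b-μ) + Real.sqrt ((b-μ)^2 + 8*σ^2)) := by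
  set s : ℝ → ℝ := fun x => Real.sqrt ((x-μ)^2 + 8*σ^2) with hsdef
  have hsarg : ∀ x : ℝ, 0 < (x-μ)^2 + 8*σ^2 := fun x => by positivity
  have hs0 : ∀ x : ℝ, 0 < s x := fun x => Real.sqrt_pos.2 (hsarg x)
  have hs2 : ∀ x : ℝ, s x ^ 2 = (x-μ)^2 + 8*σ^2 := fun x => Real.sq_sqrt (hsarg x).le
  have hs3 : ∀ x : ℝ, 2*σ ≤ s x := by
    intro x
    exact Real.le_sqrt_of_sq_le (by nlinarith [sq_nonneg (x-μ)])
  have hq : ∀ x : ℝ, μ ≤ x → 0 < 3*(x-μ) + s x := by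
    intro x hx
    have := hs0 x
    have : 0 ≤ x - μ := by linarith
    nlinarith [hs0 x]
  set H : ℝ → ℝ := fun x => -(4*σ^2 * gpdf μ σ x / (3*(x-μ) + s x)) with hH
  set H' : ℝ → ℝ := fun x =>
    4*(x-μ)*gpdf μ σ x/(3*(x-μ)+s x) + 4*σ^2*gpdf μ σ x*(3+(x-μ)/s x)/(3*(x-μ)+s x)^2 with hH'
  have hderiv : ∀ x ∈ Ici b, HasDerivAt H (H' x) x := by
    intro x hx
    have hxμ : μ ≤ x := le_trans hb hx
    have hg := hasDerivAt_gpdf hσ μ x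
    have hw : HasDerivAt (fun x : ℝ => (x-μ)^2 + 8*σ^2) (2*(x-μ)) x := by
      have := (((hasDerivAt_id x).sub_const μ).pow 2).add_const (8*σ^2)
      refine this.congr_deriv ?_
      simp only [id_eq]
      ring
    have hsd : HasDerivAt s ((x-μ)/s x) x := by
      have h1 := (Real.hasDerivAt_sqrt (hsarg x).ne').comp x hw
      refine h1.congr_deriv ?_
      rw [hsdef]
      field_simp
    have hqd : HasDerivAt (fun x => 3*(x-μ) + s x) (3 + (x-μ)/s x) x := by
      have h1 : HasDerivAt (fun x : ℝ => 3*(x-μ)) 3 x := by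
        simpa using ((hasDerivAt_id x).sub_const μ).const_mul (3:ℝ)
      exact h1.add hsd
    have hnum : HasDerivAt (fun x => 4*σ^2 * gpdf μ σ x)
        (4*σ^2 * (-((x - μ)/σ^2) * gpdf μ σ x)) x := hg.const_mul _
    have hdiv := (hnum.div hqd (hq x hxμ).ne').neg
    refine hdiv.congr_deriv ?_
    rw [hH']
    have hsx := (hs0 x).ne'
    have hqx := (hq x hxμ).ne'
    field_simp
    ring
  have hpos : ∀ x ∈ Ioi b, 0 ≤ H' x := by
    intro x hx
    have hxμ : μ ≤ x := le_trans hb (le_of_lt hx)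
    have h1 := hq x hxμ
    have h2 := hs0 x
    have hg := (gpdf_pos hσ μ x).le
    have hy : 0 ≤ x - μ := by linarith
    rw [hH']
    have t1 : 0 ≤ 4*(x-μ)*gpdf μ σ x/(3*(x-μ)+s x) :=
      div_nonneg (mul_nonneg (by linarith) hg) h1.le
    have t2 : 0 ≤ 4*σ^2*gpdf μ σ x*(3+(x-μ)/s x)/(3*(x-μ)+s x)^2 := by
      apply div_nonneg _ (sq_nonneg _)
      have : 0 ≤ 3 + (x-μ)/s x := by positivity
      have h4 : 0 ≤ 4*σ^2 := by positivity
      exact mul_nonneg (mul_nonneg h4 hg) this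
    linarith
  have hlim : Tendsto H atTop (nhds 0) := by
    apply squeeze_zero_norm' (a := fun x => 2*σ * gpdf μ σ x)
    · filter_upwards [eventually_ge_atTop μ] with x hx
      have hg := gpdf_pos hσ μ x
      have h1 := hq x hx
      have h3 := hs3 x
      have hy : 0 ≤ x - μ := by linarith
      have h4g : (0:ℝ) < 4*σ^2 * gpdf μ σ x := by
        apply mul_pos _ hg
        nlinarith
      rw [hH, Real.norm_eq_abs, abs_neg, abs_div, abs_of_pos h1, abs_of_pos h4g]
      rw [div_le_iff₀ h1]
      have h2s : 2*σ ≤ 3*(x-μ) + s x := by linarith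
      nlinarith [mul_le_mul_of_nonneg_left h2s (mul_nonneg (by linarith : (0:ℝ) ≤ 2*σ) hg.le)]
    · simpa using (tendsto_gpdf_atTop hσ μ).const_mul (2*σ)
  have key := integral_Ioi_of_hasDerivAt_of_nonneg' hderiv hpos hlim
  have hint := integrableOn_Ioi_deriv_of_nonneg' hderiv hpos hlim
  have hmono : ∫ x in Ioi b, gpdf μ σ x ≤ ∫ x in Ioi b, H' x := by
    apply setIntegral_mono_on (integrable_gpdf hσ μ).integrableOn hint measurableSet_Ioi
    intro x hx
    have hxμ : μ ≤ x := le_trans hb (le_of_lt hx)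
    rw [hH']
    exact mills_alg hσ (by linarith : (0:ℝ) ≤ x - μ) (gpdf_pos hσ μ x).le (hs0 x) (hs2 x)
  calc ∫ x in Ioi b, gpdf μ σ x ≤ ∫ x in Ioi b, H' x := hmono
  _ = 0 - H b := key
  _ = 4*σ^2 * gpdf μ σ b / (3*(b-μ) + Real.sqrt ((b-μ)^2 + 8*σ^2)) := by rw [hH]; ring

lemma mills_upper' {σ : ℝ} (hσ : 0 < σ) {μ b : ℝ} (hb : μ + σ ≤ b) :
    ∫ x in Ioi b, gpdf μ σ x ≤ (2/3) * (σ * gpdf μ σ b) := by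
  have h1 := mills_upper hσ (by linarith : μ ≤ b)
  have hs3 : 3*σ ≤ Real.sqrt ((b-μ)^2 + 8*σ^2) := by
    apply Real.le_sqrt_of_sq_le
    nlinarith
  have h6 : 6*σ ≤ 3*(b-μ) + Real.sqrt ((b-μ)^2 + 8*σ^2) := by
    have : σ ≤ b - μ := by linarith
    linarith
  have h2 : 4*σ^2 * gpdf μ σ b / (3*(b-μ) + Real.sqrt ((b-μ)^2 + 8*σ^2))
      ≤ 4*σ^2 * gpdf μ σ b / (6*σ) := by
    apply div_le_div_of_nonneg_left _ (by linarith) h6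
    have := (gpdf_pos hσ μ b).le
    positivity
  have h3 : 4*σ^2 * gpdf μ σ b / (6*σ) = (2/3) * (σ * gpdf μ σ b) := by
    field_simp
    ring
  linarith

lemma setIntegral_Iic_gpdf (μ σ b : ℝ) :
    ∫ x in Iic b, gpdf μ σ x = ∫ x in Ioi (-b), gpdf (-μ) σ x := by
  have h := integral_comp_neg_Ioi (-b) (gpdf μ σ)
  simp only [neg_neg] at h
  rw [← h]
  simp_rw [gpdf_neg']

lemma mass_split {σ : ℝ} (hσ : 0 < σ) (μ b : ℝ) :
    (∫ x in Iic b, gpdf μ σ x) + ∫ x in Ioi b, gpdf μ σ x = 1 := by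
  rw [intervalIntegral.integral_Iic_add_Ioi (integrable_gpdf hσ μ).integrableOn
    (integrable_gpdf hσ μ).integrableOn, integral_gpdf hσ]

lemma integral_mul_gpdf_total {σ : ℝ} (hσ : 0 < σ) (μ : ℝ) :
    ∫ x, x * gpdf μ σ x = μ := by
  have hIoi := moment_Ioi hσ μ μ
  have hIic : ∫ x in Iic μ, (x - μ) * gpdf μ σ x = -(σ^2 * gpdf (-μ) σ (-μ)) := by
    have h := integral_comp_neg_Ioi (-μ) (fun x => (x - μ) * gpdf μ σ x)
    simp only [neg_neg] at h
    rw [← h]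
    have heq : ∀ x : ℝ, (-x - μ) * gpdf μ σ (-x) = -((x - -μ) * gpdf (-μ) σ x) := by
      intro x
      rw [gpdf_neg']
      ring
    simp_rw [heq]
    rw [integral_neg, moment_Ioi hσ (-μ) (-μ)]
  have hgneg : gpdf (-μ) σ (-μ) = gpdf μ σ μ := by
    have := gpdf_neg' (-μ) σ μ
    simpa using this
  have hsplit := intervalIntegral.integral_Iic_add_Ioi (b := μ)
    (integrable_sub_mul_gpdf hσ μ).integrableOn (integrable_sub_mul_gpdf hσ μ).integrableOn
  have hzero : ∫ x, (x - μ) * gpdf μ σ x = 0 := by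
    rw [← hsplit, hIic, hIoi, hgneg]
    ring
  have hfun : (fun x => x * gpdf μ σ x)
      = fun x => (x - μ) * gpdf μ σ x + μ * gpdf μ σ x := by
    funext x
    ring
  rw [hfun, integral_add (integrable_sub_mul_gpdf hσ μ) ((integrable_gpdf hσ μ).const_mul μ),
    hzero, MeasureTheory.integral_const_mul, integral_gpdf hσ]
  ring

lemma moment_Iic {σ : ℝ} (hσ : 0 < σ) (μ b : ℝ) :
    ∫ x in Iic b, x * gpdf μ σ x
      = μ * (∫ x in Iic b, gpdf μ σ x) - σ^2 * gpdf μ σ b := by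
  have hsplit := intervalIntegral.integral_Iic_add_Ioi (b := b)
    (integrable_mul_gpdf hσ μ).integrableOn (integrable_mul_gpdf hσ μ).integrableOn
  rw [integral_mul_gpdf_total hσ μ] at hsplit
  have hIoi : ∫ x in Ioi b, x * gpdf μ σ x
      = σ^2 * gpdf μ σ b + μ * ∫ x in Ioi b, gpdf μ σ x := by
    have hfun : (fun x => x * gpdf μ σ x)
        = fun x => (x - μ) * gpdf μ σ x + μ * gpdf μ σ x := by
      funext x
      ring
    rw [hfun, integral_add (integrable_sub_mul_gpdf hσ μ).integrableOn
      ((integrable_gpdf hσ μ).const_mul μ).integrableOn, moment_Ioi hσ μ b,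
      MeasureTheory.integral_const_mul]
  have hmass := mass_split hσ μ b
  linear_combination hsplit - hIoi - μ * hmass

lemma iic_upper {σ : ℝ} (hσ : 0 < σ) {μ b : ℝ} (hb : b ≤ μ - σ) :
    ∫ x in Iic b, gpdf μ σ x ≤ (2/3) * (σ * gpdf μ σ b) := by
  rw [setIntegral_Iic_gpdf]
  have h := mills_upper' hσ (show -μ + σ ≤ -b by linarith)
  have hg : gpdf (-μ) σ (-b) = gpdf μ σ b := by
    have := gpdf_neg' (-μ) σ b
    simpa using this
  rw [hg] at h
  exact h

lemma iic_lower {σ : ℝ} (hσ : 0 < σ) {μ b : ℝ} (hb : b ≤ μ - σ) :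
    σ^2 * (μ - b) * gpdf μ σ b / ((μ - b)^2 + σ^2) ≤ ∫ x in Iic b, gpdf μ σ x := by
  rw [setIntegral_Iic_gpdf]
  have h := mills_lower hσ (show -μ + σ ≤ -b by linarith)
  have hg : gpdf (-μ) σ (-b) = gpdf μ σ b := by
    have := gpdf_neg' (-μ) σ b
    simpa using this
  rw [hg] at h
  have he : (-b - -μ) = μ - b := by ring
  rw [he] at h
  exact h

lemma core_arith {σ A B α β w1 w2 μ1 μ2 : ℝ} (hσ : 0 < σ) (hμ : μ2 = μ1 + 7*σ)
    (hw1 : 0 < w1) (hw2 : 0 < w2) (hww : w2 ≤ 4*w1)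
    (hα0 : 0 < α) (hβ0 : 0 < β) (hα4 : α ≤ σ/4) (hβ4 : β ≤ σ/4)
    (hA1 : A ≤ 1) (hAl : σ - (2/3)*α ≤ σ*A) (hB0 : 0 ≤ B)
    (hBu : σ*B ≤ (2/3)*β) (hBl : β ≤ 9.5*(σ*B)) :
    (w1*(μ1*A - α) + w2*(μ2*B - β)) / (w1*A + w2*B) ∈ Icc (μ1 - 2.5*σ) (μ1 + 2.5*σ) := by
  have hDpos : 0 < w1*A + w2*B := by nlinarith
  have hk1 : 0 ≤ 2.5*(σ*A) - α := by linarith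
  have hk2 : 0 ≤ 9.5*(σ*B) - β := by linarith
  have hk3 : 4.5*(σ*B) - β ≤ 2*β := by linarith
  have hk4 : 2*σ ≤ 2.5*(σ*A) + α := by linarith
  rw [Set.mem_Icc]
  constructor
  · rw [le_div_iff₀ hDpos, hμ]
    nlinarith [mul_nonneg hw1.le hk1, mul_nonneg hw2.le hk2]
  · rw [div_le_iff₀ hDpos, hμ]
    have e1 : w2*(4.5*(σ*B) - β) ≤ w2*(2*β) := mul_le_mul_of_nonneg_left hk3 hw2.le
    have e2 : w2*(2*β) ≤ 4*w1*(2*β) := mul_le_mul_of_nonneg_right hww (by linarith)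
    have e3 : 4*w1*(2*β) ≤ 2*(w1*σ) := by nlinarith
    have e4 : 2*(w1*σ) ≤ w1*(2.5*(σ*A) + α) := by nlinarith [mul_le_mul_of_nonneg_left hk4 hw1.le]
    nlinarith [e1, e2, e3, e4]

lemma cm_Iic_mem {σ μ1 μ2 w1 w2 b : ℝ} (hσ : 0 < σ) (hμ : μ2 = μ1 + 7*σ)
    (hw1 : 0 < w1) (hw2 : 0 < w2) (hww : w2 ≤ 4*w1)
    (hb1 : μ1 + σ ≤ b) (hb2 : b ≤ μ1 + 6*σ) :
    cm (fun x => w1 * gpdf μ1 σ x + w2 * gpdf μ2 σ x) (Iic b) ∈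
      Icc (μ1 - 2.5*σ) (μ1 + 2.5*σ) := by
  have hg1 := gpdf_pos hσ μ1 b
  have hg2 := gpdf_pos hσ μ2 b
  have hα0 : 0 < σ^2 * gpdf μ1 σ b := by positivity
  have hβ0 : 0 < σ^2 * gpdf μ2 σ b := by positivity
  have hα4 : σ^2 * gpdf μ1 σ b ≤ σ/4 := by
    have h := sigma_gpdf_le hσ μ1 b (by rw [abs_of_nonneg (by linarith : (0:ℝ) ≤ b - μ1)]; linarith)
    nlinarith
  have hβ4 : σ^2 * gpdf μ2 σ b ≤ σ/4 := by
    have h := sigma_gpdf_le hσ μ2 b (by rw [abs_of_nonpos (by linarith : b - μ2 ≤ 0)]; linarith)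
    nlinarith
  have hIoi1 : ∫ x in Ioi b, gpdf μ1 σ x ≤ (2/3) * (σ * gpdf μ1 σ b) := mills_upper' hσ hb1
  have hIoi1nn : 0 ≤ ∫ x in Ioi b, gpdf μ1 σ x :=
    setIntegral_nonneg measurableSet_Ioi fun x _ => (gpdf_pos hσ μ1 x).le
  have hmass1 := mass_split hσ μ1 b
  have hA1 : (∫ x in Iic b, gpdf μ1 σ x) ≤ 1 := by linarith
  have hAl : σ - (2/3)*(σ^2 * gpdf μ1 σ b) ≤ σ*(∫ x in Iic b, gpdf μ1 σ x) := by
    nlinarith [hσ]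
  have hB0 : 0 ≤ ∫ x in Iic b, gpdf μ2 σ x :=
    setIntegral_nonneg measurableSet_Iic fun x _ => (gpdf_pos hσ μ2 x).le
  have hbu : b ≤ μ2 - σ := by linarith
  have hBu : σ*(∫ x in Iic b, gpdf μ2 σ x) ≤ (2/3)*(σ^2 * gpdf μ2 σ b) := by
    have h := iic_upper hσ hbu
    nlinarith
  have hBl : σ^2 * gpdf μ2 σ b ≤ 9.5*(σ*(∫ x in Iic b, gpdf μ2 σ x)) := by
    have h := iic_lower hσ hbu
    have hd1 : σ ≤ μ2 - b := by linarith
    have hd6 : μ2 - b ≤ 6*σ := by linarith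
    have hden : (0:ℝ) < (μ2-b)^2 + σ^2 := by positivity
    have hq : (μ2-b)^2 + σ^2 ≤ 9.5*(σ*(μ2-b)) := by
      nlinarith [mul_nonneg (sub_nonneg.2 hd1) (sub_nonneg.2 hd6),
        mul_nonneg hσ.le (by linarith : (0:ℝ) ≤ μ2 - b), mul_pos hσ hσ]
    have h5 : σ^2 * gpdf μ2 σ b
        ≤ 9.5*σ*(σ^2 * (μ2-b) * gpdf μ2 σ b / ((μ2-b)^2 + σ^2)) := by
      rw [mul_div_assoc', le_div_iff₀ hden]
      nlinarith [mul_le_mul_of_nonneg_left hq hβ0.le]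
    have h6 : 9.5*σ*(σ^2 * (μ2-b) * gpdf μ2 σ b / ((μ2-b)^2 + σ^2))
        ≤ 9.5*σ*(∫ x in Iic b, gpdf μ2 σ x) :=
      mul_le_mul_of_nonneg_left h (by linarith)
    calc σ^2 * gpdf μ2 σ b ≤ _ := h5
    _ ≤ 9.5*σ*(∫ x in Iic b, gpdf μ2 σ x) := h6
    _ = 9.5*(σ*(∫ x in Iic b, gpdf μ2 σ x)) := by ring
  have hint1 : IntegrableOn (fun x => w1 * gpdf μ1 σ x) (Iic b) :=
    ((integrable_gpdf hσ μ1).const_mul w1).integrableOn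
  have hint2 : IntegrableOn (fun x => w2 * gpdf μ2 σ x) (Iic b) :=
    ((integrable_gpdf hσ μ2).const_mul w2).integrableOn
  have hD : ∫ x in Iic b, (w1 * gpdf μ1 σ x + w2 * gpdf μ2 σ x)
      = w1*(∫ x in Iic b, gpdf μ1 σ x) + w2*(∫ x in Iic b, gpdf μ2 σ x) := by
    rw [integral_add hint1 hint2, MeasureTheory.integral_const_mul,
      MeasureTheory.integral_const_mul]
  have hN : ∫ x in Iic b, x * (w1 * gpdf μ1 σ x + w2 * gpdf μ2 σ x)
      = w1*(μ1*(∫ x in Iic b, gpdf μ1 σ x) - σ^2 * gpdf μ1 σ b)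
        + w2*(μ2*(∫ x in Iic b, gpdf μ2 σ x) - σ^2 * gpdf μ2 σ b) := by
    have hfun : (fun x => x * (w1 * gpdf μ1 σ x + w2 * gpdf μ2 σ x))
        = fun x => w1 * (x * gpdf μ1 σ x) + w2 * (x * gpdf μ2 σ x) := by
      funext x
      ring
    rw [hfun, integral_add ((integrable_mul_gpdf hσ μ1).const_mul w1).integrableOn
      ((integrable_mul_gpdf hσ μ2).const_mul w2).integrableOn,
      MeasureTheory.integral_const_mul, MeasureTheory.integral_const_mul,
      moment_Iic hσ μ1 b, moment_Iic hσ μ2 b]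
  have hcm : cm (fun x => w1 * gpdf μ1 σ x + w2 * gpdf μ2 σ x) (Iic b)
      = (w1*(μ1*(∫ x in Iic b, gpdf μ1 σ x) - σ^2 * gpdf μ1 σ b)
          + w2*(μ2*(∫ x in Iic b, gpdf μ2 σ x) - σ^2 * gpdf μ2 σ b))
        / (w1*(∫ x in Iic b, gpdf μ1 σ x) + w2*(∫ x in Iic b, gpdf μ2 σ x)) := by
    unfold cm
    rw [hN, hD]
  rw [hcm]
  exact core_arith hσ hμ hw1 hw2 hww hα0 hβ0 hα4 hβ4 hA1 hAl hB0 hBu hBl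

lemma cm_Ioi_mem {σ μ1 μ2 w1 w2 b : ℝ} (hσ : 0 < σ) (hμ : μ2 = μ1 + 7*σ)
    (hw1 : 0 < w1) (hw2 : 0 < w2) (hww : w1 ≤ 4*w2)
    (hb1 : μ1 + σ ≤ b) (hb2 : b ≤ μ1 + 6*σ) :
    cm (fun x => w1 * gpdf μ1 σ x + w2 * gpdf μ2 σ x) (Ioi b) ∈
      Icc (μ2 - 2.5*σ) (μ2 + 2.5*σ) := by
  have hL := cm_Iic_mem (σ := σ) (μ1 := -μ2) (μ2 := -μ1) (w1 := w2) (w2 := w1) (b := -b)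
    hσ (by linarith) hw2 hw1 hww (by linarith) (by linarith)
  have hfg : ∀ x : ℝ, w1 * gpdf μ1 σ x + w2 * gpdf μ2 σ x
      = w2 * gpdf (-μ2) σ (-x) + w1 * gpdf (-μ1) σ (-x) := by
    intro x
    rw [gpdf_neg' (-μ2) σ x, gpdf_neg' (-μ1) σ x]
    simp only [neg_neg]
    ring
  have hDen : ∫ x in Ioi b, (w1 * gpdf μ1 σ x + w2 * gpdf μ2 σ x)
      = ∫ x in Iic (-b), (w2 * gpdf (-μ2) σ x + w1 * gpdf (-μ1) σ x) := by
    rw [← integral_comp_neg_Ioi b (fun x => w2 * gpdf (-μ2) σ x + w1 * gpdf (-μ1) σ x)]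
    exact setIntegral_congr_fun measurableSet_Ioi fun x _ => hfg x
  have hNum : ∫ x in Ioi b, x * (w1 * gpdf μ1 σ x + w2 * gpdf μ2 σ x)
      = - ∫ x in Iic (-b), x * (w2 * gpdf (-μ2) σ x + w1 * gpdf (-μ1) σ x) := by
    rw [← integral_comp_neg_Ioi b (fun x => x * (w2 * gpdf (-μ2) σ x + w1 * gpdf (-μ1) σ x)),
      ← integral_neg]
    apply setIntegral_congr_fun measurableSet_Ioi
    intro x _
    simp only
    rw [← hfg x]
    ring
  have hcm : cm (fun x => w1 * gpdf μ1 σ x + w2 * gpdf μ2 σ x) (Ioi b)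
      = - cm (fun x => w2 * gpdf (-μ2) σ x + w1 * gpdf (-μ1) σ x) (Iic (-b)) := by
    unfold cm
    rw [hNum, hDen, neg_div]
  rw [hcm]
  rw [Set.mem_Icc] at hL ⊢
  obtain ⟨hl, hu⟩ := hL
  constructor
  · linarith
  · linarith


/-- for `Δ = 7σ`, weights `{0.2, 0.8}` and `a = 2.5σ`, the square
`S_a` is a stable region for the one-step population k-means update with `K' = 2`. -/
theorem stmt2 (σ μ₁ μ₂ w₁ w₂ a : ℝ) (hσ : 0 < σ)
    (hμ : μ₂ - μ₁ = 7 * σ)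
    (hw : (w₁ = 0.2 ∧ w₂ = 0.8) ∨ (w₁ = 0.8 ∧ w₂ = 0.2))
    (ha : a = 2.5 * σ)
    (f : ℝ → ℝ) (hf : f = fun x => w₁ * gpdf μ₁ σ x + w₂ * gpdf μ₂ σ x) :
    ∀ c ∈ Set.Icc (μ₁ - a) (μ₁ + a) ×ˢ Set.Icc (μ₂ - a) (μ₂ + a),
      update2 f c ∈ Set.Icc (μ₁ - a) (μ₁ + a) ×ˢ Set.Icc (μ₂ - a) (μ₂ + a) := by
  intro c hc
  rw [Set.mem_prod] at hc ⊢
  obtain ⟨hc1, hc2⟩ := hc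
  rw [Set.mem_Icc] at hc1 hc2
  obtain ⟨hc1l, hc1u⟩ := hc1
  obtain ⟨hc2l, hc2u⟩ := hc2
  have hμ2 : μ₂ = μ₁ + 7*σ := by linarith
  have hb1 : μ₁ + σ ≤ (c.1 + c.2) / 2 := by
    rw [ha] at hc1l hc2l
    rw [hμ2] at hc2l
    linarith
  have hb2 : (c.1 + c.2) / 2 ≤ μ₁ + 6*σ := by
    rw [ha] at hc1u hc2u
    rw [hμ2] at hc2u
    linarith
  have hw1 : 0 < w₁ := by rcases hw with ⟨h1, _⟩ | ⟨h1, _⟩ <;> rw [h1] <;> norm_num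
  have hw2 : 0 < w₂ := by rcases hw with ⟨_, h2⟩ | ⟨_, h2⟩ <;> rw [h2] <;> norm_num
  have hww1 : w₂ ≤ 4*w₁ := by rcases hw with ⟨h1, h2⟩ | ⟨h1, h2⟩ <;> rw [h1, h2] <;> norm_num
  have hww2 : w₁ ≤ 4*w₂ := by rcases hw with ⟨h1, h2⟩ | ⟨h1, h2⟩ <;> rw [h1, h2] <;> norm_num
  have h1 := cm_Iic_mem (σ := σ) (μ1 := μ₁) (μ2 := μ₂) (w1 := w₁) (w2 := w₂)
    (b := (c.1 + c.2) / 2) hσ hμ2 hw1 hw2 hww1 hb1 hb2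
  have h2 := cm_Ioi_mem (σ := σ) (μ1 := μ₁) (μ2 := μ₂) (w1 := w₁) (w2 := w₂)
    (b := (c.1 + c.2) / 2) hσ hμ2 hw1 hw2 hww2 hb1 hb2
  rw [← hf] at h1 h2
  rw [Set.mem_Icc] at h1 h2
  obtain ⟨l1, u1⟩ := h1
  obtain ⟨l2, u2⟩ := h2
  constructor
  · show cm f (Set.Iic ((c.1 + c.2) / 2)) ∈ _
    rw [Set.mem_Icc]
    constructor
    · rw [ha]; linarith
    · rw [ha]; linarith
  · show cm f (Set.Ioi ((c.1 + c.2) / 2)) ∈ _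
    rw [Set.mem_Icc]
    constructor
    · rw [ha]; linarith
    · rw [ha]; linarith
end

section
/- One step of the k-means algorithm in one dimension does not change the order of the centers: let X₁, …, Xₙ ∈ ℝ be data points and c₁ < c₂ < … < c_{K'} centers such that each cluster C_k = {i : |X_i − c_k| ≤ |X_i − c_l| for all l} (ties broken by assigning to the smaller index) is nonempty. Then the updated centers c'_k = (1/|C_k|)·∑_{i ∈ C_k} X_i satisfy c'₁ ≤ c'₂ ≤ … ≤ c'_{K'}. -/
open scoped Classical

/-- one step of k-means in one dimension does not change the order
of the centers. Each data point is assigned to its closest center, ties broken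
towards the smaller index; assuming every cluster is nonempty, the updated
centers (cluster means) are again ordered. -/
theorem stmt6 (n K' : ℕ) (X : Fin n → ℝ) (c : Fin K' → ℝ)
    (hc : StrictMono c)
    (C : Fin K' → Finset (Fin n))
    (hC : ∀ k, C k = Finset.univ.filter (fun i =>
        (∀ l, |X i - c k| ≤ |X i - c l|) ∧ ∀ l, l < k → |X i - c k| < |X i - c l|))
    (hne : ∀ k, (C k).Nonempty)
    (c' : Fin K' → ℝ)
    (hc' : ∀ k, c' k = (∑ i ∈ C k, X i) / (C k).card) :
    Monotone c' := by
  intro k l hkl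
  rcases eq_or_lt_of_le hkl with rfl | hkl
  · exact le_refl _
  have hck : c k < c l := hc hkl
  set m := (c k + c l) / 2 with hm
  have hA : ∀ i ∈ C k, X i ≤ m := by
    intro i hi
    rw [hC k, Finset.mem_filter] at hi
    have h := hi.2.1 l
    have h2 : (X i - c k) ^ 2 ≤ (X i - c l) ^ 2 := by
      rw [← sq_abs, ← sq_abs (X i - c l)]
      exact pow_le_pow_left₀ (abs_nonneg _) h 2
    nlinarith
  have hB : ∀ j ∈ C l, m ≤ X j := by
    intro j hj
    rw [hC l, Finset.mem_filter] at hj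
    have h := hj.2.2 k hkl
    have h2 : (X j - c l) ^ 2 < (X j - c k) ^ 2 := by
      rw [← sq_abs, ← sq_abs (X j - c k)]
      exact pow_lt_pow_left₀ h (abs_nonneg _) (by norm_num)
    nlinarith
  have hk0 : (0 : ℝ) < (C k).card := by
    exact_mod_cast Finset.card_pos.mpr (hne k)
  have hl0 : (0 : ℝ) < (C l).card := by
    exact_mod_cast Finset.card_pos.mpr (hne l)
  rw [hc' k, hc' l]
  have s1 : (∑ i ∈ C k, X i) ≤ (C k).card * m := by
    calc (∑ i ∈ C k, X i) ≤ ∑ _i ∈ C k, m := Finset.sum_le_sum hA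
    _ = (C k).card * m := by rw [Finset.sum_const, nsmul_eq_mul]
  have s2 : ((C l).card : ℝ) * m ≤ ∑ i ∈ C l, X i := by
    calc ((C l).card : ℝ) * m = ∑ _i ∈ C l, m := by rw [Finset.sum_const, nsmul_eq_mul]
    _ ≤ _ := Finset.sum_le_sum hB
  calc (∑ i ∈ C k, X i) / (C k).card ≤ m := by
        rw [div_le_iff₀ hk0]; linarith
  _ ≤ (∑ i ∈ C l, X i) / (C l).card := by
        rw [le_div_iff₀ hl0]; linarith
end

section
/- Let r(x) = φ(x)/(1 − Φ(x)), which equals the center of mass of the interval [x, ∞) under the standard Gaussian distribution truncated to [x, ∞). Then r is positive, increasing, and convex on [0, ∞). -/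
open MeasureTheory

/-- standard normal pdf `φ` -/
noncomputable def stdPdf (x : ℝ) : ℝ := gpdf 0 1 x

/-- standard normal cdf `Φ` -/
noncomputable def stdCdf (x : ℝ) : ℝ := ∫ t in Set.Iic x, stdPdf t

/-- `r(x) = φ(x)/(1−Φ(x))`, the center of mass of `[x,∞)` under the truncated
standard Gaussian. -/
noncomputable def rfun (x : ℝ) : ℝ := stdPdf x / (1 - stdCdf x)

section Aux

open Real Set Filter

lemma stdPdf_eq (x : ℝ) : stdPdf x = (Real.sqrt (2 * π))⁻¹ * Real.exp (-(1/2) * x ^ 2) := by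
  unfold stdPdf gpdf
  rw [one_mul]
  congr 1
  ring

lemma stdPdf_pos (x : ℝ) : 0 < stdPdf x := by
  rw [stdPdf_eq]
  positivity

lemma integrable_stdPdf : Integrable stdPdf := by
  have := (integrable_exp_neg_mul_sq (by norm_num : (0:ℝ) < 1/2)).const_mul (Real.sqrt (2*π))⁻¹
  exact this.congr (Filter.Eventually.of_forall fun x => (stdPdf_eq x).symm)

lemma integral_stdPdf : ∫ x, stdPdf x = 1 := by
  have h : ∫ x, stdPdf x = (Real.sqrt (2*π))⁻¹ * ∫ x : ℝ, Real.exp (-(1/2) * x ^ 2) := by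
    rw [← integral_const_mul]; congr 1; ext x; rw [stdPdf_eq]
  rw [h, integral_gaussian]
  rw [inv_mul_eq_one₀ (by positivity)]
  rw [show π / (1/2) = 2 * π by ring]

lemma hasDerivAt_stdPdf (x : ℝ) : HasDerivAt stdPdf (-x * stdPdf x) x := by
  have h : ∀ y, stdPdf y = (Real.sqrt (2 * π))⁻¹ * Real.exp (-(1/2) * y ^ 2) := stdPdf_eq
  rw [funext h]
  have h1 : HasDerivAt (fun y : ℝ => -(1/2) * y ^ 2) (-x) x := by
    simpa using ((hasDerivAt_pow 2 x).const_mul (-(1/2) : ℝ))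
  have := (h1.exp).const_mul (Real.sqrt (2 * π))⁻¹
  refine this.congr_deriv ?_
  ring

lemma continuous_stdPdf : Continuous stdPdf :=
  continuous_iff_continuousAt.2 fun x => (hasDerivAt_stdPdf x).continuousAt

lemma oneSubCdf_eq (x : ℝ) : 1 - stdCdf x = ∫ t in Set.Ioi x, stdPdf t := by
  have := intervalIntegral.integral_Iic_add_Ioi (b := x) integrable_stdPdf.integrableOn
    integrable_stdPdf.integrableOn
  rw [integral_stdPdf] at this
  unfold stdCdf
  linarith

lemma oneSubCdf_pos (x : ℝ) : 0 < 1 - stdCdf x := by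
  rw [oneSubCdf_eq]
  rw [setIntegral_pos_iff_support_of_nonneg_ae
    (Filter.Eventually.of_forall fun t => (stdPdf_pos t).le) integrable_stdPdf.integrableOn]
  have : Function.support stdPdf = Set.univ := by
    ext t; simp [(stdPdf_pos t).ne']
  rw [this, Set.univ_inter]
  simp [Real.volume_Ioi]

lemma hasDerivAt_stdCdf (x : ℝ) : HasDerivAt stdCdf (stdPdf x) x := by
  have key : ∀ y, stdCdf y = stdCdf 0 + ∫ t in (0:ℝ)..y, stdPdf t := by
    intro y
    have := intervalIntegral.integral_Iic_sub_Iic (μ := volume) (f := stdPdf) (a := (0:ℝ)) (b := y)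
      integrable_stdPdf.integrableOn integrable_stdPdf.integrableOn
    unfold stdCdf
    linarith
  rw [funext key]
  exact (intervalIntegral.integral_hasDerivAt_right
    (integrable_stdPdf.intervalIntegrable)
    (continuous_stdPdf.stronglyMeasurableAtFilter _ _)
    continuous_stdPdf.continuousAt).const_add _

lemma integrableOn_mul_stdPdf (x : ℝ) : IntegrableOn (fun t => t * stdPdf t) (Set.Ioi x) := by
  have : Integrable (fun t : ℝ => t * stdPdf t) := by
    have := (integrable_mul_exp_neg_mul_sq (by norm_num : (0:ℝ) < 1/2)).mul_const
      (Real.sqrt (2*π))⁻¹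
    exact this.congr (Filter.Eventually.of_forall fun t => by simp only [stdPdf_eq]; ring)
  exact this.integrableOn

lemma integral_mul_stdPdf (x : ℝ) : ∫ t in Set.Ioi x, t * stdPdf t = stdPdf x := by
  have hd : ∀ t ∈ Set.Ici x, HasDerivAt (fun y => -stdPdf y) (t * stdPdf t) t := by
    intro t _
    refine (hasDerivAt_stdPdf t).neg.congr_deriv ?_
    ring
  have hlim : Tendsto (fun y => -stdPdf y) atTop (nhds 0) := by
    rw [← neg_zero]
    apply Tendsto.neg
    have : Tendsto (fun y : ℝ => (Real.sqrt (2*π))⁻¹ * Real.exp (-(1/2) * y ^ 2)) atTop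
        (nhds ((Real.sqrt (2*π))⁻¹ * 0)) := by
      apply Tendsto.const_mul
      apply Real.tendsto_exp_atBot.comp
      apply Filter.Tendsto.const_mul_atTop_of_neg (by norm_num : (-(1/2):ℝ) < 0)
      exact tendsto_pow_atTop (by norm_num)
    rw [mul_zero] at this
    exact this.congr fun y => (stdPdf_eq y).symm
  have := integral_Ioi_of_hasDerivAt_of_tendsto' hd (integrableOn_mul_stdPdf x) hlim
  rw [this]; ring

lemma mills (x : ℝ) : x * (1 - stdCdf x) < stdPdf x := by
  have key : 0 < ∫ t in Set.Ioi x, (t - x) * stdPdf t := by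
    rw [setIntegral_pos_iff_support_of_nonneg_ae]
    · have hsub : Set.Ioi x ⊆ Function.support (fun t => (t - x) * stdPdf t) ∩ Set.Ioi x := by
        intro t ht
        refine ⟨?_, ht⟩
        simp only [Function.mem_support]
        exact mul_ne_zero (sub_ne_zero.2 (ne_of_gt ht)) (stdPdf_pos t).ne'
      calc (0:ENNReal) < volume (Set.Ioi x) := by simp [Real.volume_Ioi]
        _ ≤ _ := measure_mono hsub
    · rw [EventuallyLE, ae_restrict_iff' measurableSet_Ioi]
      exact Filter.Eventually.of_forall fun t ht =>
        mul_nonneg (by linarith [ht.out]) (stdPdf_pos t).le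
    · have h1 : IntegrableOn (fun t => t * stdPdf t - x * stdPdf t) (Set.Ioi x) :=
        (integrableOn_mul_stdPdf x).sub (integrable_stdPdf.integrableOn.const_mul x)
      exact h1.congr (Filter.Eventually.of_forall fun t => by ring)
  have heq : ∫ t in Set.Ioi x, (t - x) * stdPdf t
      = stdPdf x - x * (1 - stdCdf x) := by
    rw [oneSubCdf_eq]
    rw [show (fun t => (t - x) * stdPdf t) = fun t => t * stdPdf t - x * stdPdf t from
      funext fun t => by ring]
    rw [integral_sub (integrableOn_mul_stdPdf x) (integrable_stdPdf.integrableOn.const_mul x),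
      integral_mul_stdPdf, integral_const_mul]
  linarith [heq ▸ key]

lemma rfun_pos (x : ℝ) : 0 < rfun x := div_pos (stdPdf_pos x) (oneSubCdf_pos x)

lemma rfun_gt (x : ℝ) : x < rfun x := by
  have h := mills x
  unfold rfun
  rw [lt_div_iff₀ (oneSubCdf_pos x)]
  linarith

lemma hasDerivAt_rfun (x : ℝ) :
    HasDerivAt rfun (rfun x * (rfun x - x)) x := by
  have hQ : (1 - stdCdf x) ≠ 0 := (oneSubCdf_pos x).ne'
  have h := (hasDerivAt_stdPdf x).div ((hasDerivAt_const x (1:ℝ)).sub (hasDerivAt_stdCdf x)) hQ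
  refine HasDerivAt.congr_deriv (f := rfun) h ?_
  simp only [rfun, Pi.sub_apply]
  field_simp
  ring

/-- `u(x) = r(x) − x` -/
noncomputable def uu (x : ℝ) : ℝ := rfun x - x

/-- `w(x) = 2u(x)² + x·u(x) − 1`; one has `r'' = r·w`. -/
noncomputable def ww (x : ℝ) : ℝ := 2 * uu x ^ 2 + x * uu x - 1

lemma uu_pos (x : ℝ) : 0 < uu x := by unfold uu; linarith [rfun_gt x]

lemma hasDerivAt_uu (x : ℝ) : HasDerivAt uu (uu x ^ 2 + x * uu x - 1) x := by
  have h := (hasDerivAt_rfun x).sub (hasDerivAt_id x)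
  have : rfun x * (rfun x - x) - 1 = uu x ^ 2 + x * uu x - 1 := by unfold uu; ring
  rw [← this]
  exact h.congr_deriv rfl |>.congr_of_eventuallyEq (by rfl)

lemma continuous_uu : Continuous uu :=
  continuous_iff_continuousAt.2 fun x => (hasDerivAt_uu x).continuousAt

lemma hasDerivAt_ww (x : ℝ) :
    HasDerivAt ww ((uu x ^ 2 + x * uu x - 1) * (4 * uu x + x) + uu x) x := by
  have h1 : HasDerivAt (fun y => 2 * uu y ^ 2 + y * uu y - 1)
      (2 * (2 * uu x * (uu x ^ 2 + x * uu x - 1)) +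
        (1 * uu x + x * (uu x ^ 2 + x * uu x - 1))) x := by
    exact ((((hasDerivAt_uu x).pow 2).const_mul 2).add
      ((hasDerivAt_id x).mul (hasDerivAt_uu x))).sub_const 1 |>.congr_deriv
        (by simp only [id_eq]; ring)
  exact h1.congr_deriv (by ring)

lemma continuous_ww : Continuous ww :=
  continuous_iff_continuousAt.2 fun x => (hasDerivAt_ww x).continuousAt

lemma deriv_ww_neg {y : ℝ} (hy : 0 ≤ y) (hwy : ww y < 0) : deriv ww y < 0 := by
  rw [(hasDerivAt_ww y).deriv]
  have hu := uu_pos y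
  have hkey : (uu y ^ 2 + y * uu y - 1) * (4 * uu y + y) + uu y
      = (y + 3 * uu y) * ww y - 2 * uu y ^ 3 := by unfold ww; ring
  rw [hkey]
  nlinarith

/-- Sampford's argument: `w ≥ 0` on `[0, ∞)`, i.e. `r'' ≥ 0`. -/
lemma ww_nonneg {x0 : ℝ} (hx0 : 0 ≤ x0) : 0 ≤ ww x0 := by
  by_contra hw0
  push_neg at hw0
  -- Step 1 : ww stays negative on [x0, ∞)
  have hneg : ∀ x ∈ Ici x0, ww x < 0 := by
    by_contra hc
    push_neg at hc
    obtain ⟨x1, hx1, hww1⟩ := hc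
    have hScl : IsClosed (Ici x0 ∩ ww ⁻¹' Ici 0) :=
      isClosed_Ici.inter (isClosed_Ici.preimage continuous_ww)
    have hbdd : BddBelow (Ici x0 ∩ ww ⁻¹' Ici 0) := ⟨x0, fun y hy => hy.1⟩
    have htS : sInf (Ici x0 ∩ ww ⁻¹' Ici 0) ∈ Ici x0 ∩ ww ⁻¹' Ici 0 :=
      hScl.csInf_mem ⟨x1, hx1, hww1⟩ hbdd
    set t := sInf (Ici x0 ∩ ww ⁻¹' Ici 0) with ht
    have htgt : x0 < t := by
      rcases lt_or_eq_of_le (Set.mem_Ici.1 htS.1 : x0 ≤ t) with h | h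
      · exact h
      · exact absurd (h ▸ htS.2 : (0:ℝ) ≤ ww x0) (not_le.2 hw0)
    have hlt : ∀ y ∈ Ico x0 t, ww y < 0 := by
      intro y hy
      by_contra hge
      push_neg at hge
      exact absurd (csInf_le hbdd ⟨hy.1, hge⟩) (not_le.2 hy.2)
    have hanti : StrictAntiOn ww (Icc x0 t) := by
      apply strictAntiOn_of_deriv_neg (convex_Icc _ _) continuous_ww.continuousOn
      intro y hy
      rw [interior_Icc] at hy
      exact deriv_ww_neg (le_trans hx0 hy.1.le) (hlt y ⟨hy.1.le, hy.2⟩)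
    have := hanti (left_mem_Icc.2 htgt.le) (right_mem_Icc.2 htgt.le) htgt
    have h2 : (0:ℝ) ≤ ww t := htS.2
    linarith
  -- Step 2 : ww is antitone on [x0, ∞), so ww ≤ ww x0 there
  have hanti2 : AntitoneOn ww (Ici x0) := by
    apply antitoneOn_of_deriv_nonpos (convex_Ici x0) continuous_ww.continuousOn
    · exact fun y _ => (hasDerivAt_ww y).differentiableAt.differentiableWithinAt
    · intro y hy
      rw [interior_Ici] at hy
      exact (deriv_ww_neg (le_trans hx0 hy.le) (hneg y (mem_Ici.2 (le_of_lt (mem_Ioi.1 hy))))).le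
  -- Step 3 : then uu decreases linearly, contradiction with uu > 0
  set c := ww x0 with hcdef
  have hc : c < 0 := hw0
  have hganti : AntitoneOn (fun y => uu y - c * y) (Ici x0) := by
    apply antitoneOn_of_deriv_nonpos (convex_Ici x0)
      (continuous_uu.sub (continuous_const.mul continuous_id')).continuousOn
    · intro y _
      exact ((hasDerivAt_uu y).sub
        ((hasDerivAt_id y).const_mul c)).differentiableAt.differentiableWithinAt
    · intro y hy
      rw [interior_Ici] at hy
      have hDg : deriv (fun y => uu y - c * y) y = (uu y ^ 2 + y * uu y - 1) - c := by
        have := (hasDerivAt_uu y).sub ((hasDerivAt_id' y).const_mul c)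
        rw [show (fun y => uu y - c * y) = uu - fun y => c * y from rfl, this.deriv]; ring
      show deriv (fun y => uu y - c * y) y ≤ 0
      rw [hDg]
      have h1 : ww y ≤ c := hanti2 self_mem_Ici (le_of_lt (mem_Ioi.1 hy)) (le_of_lt (mem_Ioi.1 hy))
      have h2 : uu y ^ 2 + y * uu y - 1 = ww y - uu y ^ 2 := by unfold ww; ring
      nlinarith [sq_nonneg (uu y)]
  set X := x0 + (uu x0 + 1) / (-c) with hX
  have hXge : x0 ≤ X := by
    have : 0 ≤ (uu x0 + 1) / (-c) := div_nonneg (by linarith [uu_pos x0]) (by linarith)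
    rw [hX]
    linarith
  have hg := hganti self_mem_Ici hXge hXge
  simp only at hg
  have hcne : c ≠ 0 := ne_of_lt hc
  have hcX : c * (X - x0) = -(uu x0 + 1) := by
    rw [hX]
    field_simp
    ring
  have : uu X ≤ -1 := by nlinarith
  linarith [uu_pos X]

end Aux

/-- `r(x) = φ(x)/(1−Φ(x))` is positive, increasing and convex on
`[0, ∞)`. -/
theorem stmt14 :
    (∀ x ∈ Set.Ici (0 : ℝ), 0 < rfun x) ∧
    StrictMonoOn rfun (Set.Ici (0 : ℝ)) ∧
    ConvexOn ℝ (Set.Ici (0 : ℝ)) rfun := by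
  have hcont : Continuous rfun :=
    continuous_iff_continuousAt.2 fun x => (hasDerivAt_rfun x).continuousAt
  have hdr : deriv rfun = fun y => rfun y * (rfun y - y) :=
    funext fun y => (hasDerivAt_rfun y).deriv
  refine ⟨fun x _ => rfun_pos x, ?_, ?_⟩
  · apply strictMonoOn_of_deriv_pos (convex_Ici 0) hcont.continuousOn
    intro x hx
    rw [interior_Ici] at hx
    rw [hdr]
    exact mul_pos (rfun_pos x) (by linarith [rfun_gt x])
  · apply convexOn_of_deriv2_nonneg (convex_Ici 0) hcont.continuousOn
    · exact fun x _ => (hasDerivAt_rfun x).differentiableAt.differentiableWithinAt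
    · rw [hdr]
      intro x _
      exact ((hasDerivAt_rfun x).mul ((hasDerivAt_rfun x).sub
        (hasDerivAt_id' x))).differentiableAt.differentiableWithinAt
    · intro x hx
      rw [interior_Ici] at hx
      have h2 : deriv^[2] rfun x = deriv (deriv rfun) x := rfl
      rw [h2, hdr]
      have hD : HasDerivAt (fun y => rfun y * (rfun y - y)) (rfun x * (rfun x - x) * (rfun x - x) +
          rfun x * (rfun x * (rfun x - x) - 1)) x :=
        (hasDerivAt_rfun x).mul ((hasDerivAt_rfun x).sub (hasDerivAt_id' x))
      rw [hD.deriv]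
      have heq : rfun x * (rfun x - x) * (rfun x - x) +
          rfun x * (rfun x * (rfun x - x) - 1) = rfun x * ww x := by
        unfold ww uu; ring
      rw [heq]
      exact mul_nonneg (rfun_pos x).le (ww_nonneg hx.le)
end
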